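/- For positive semidefinite matrices, the map (x,y) ↦ x # y (geometric mean) is jointly concave: (λx₁ + (1−λ)x₂) # (λy₁ + (1−λ)y₂) ≥ λ(x₁ # y₁) + (1−λ)(x₂ # y₂) for λ ∈ [0,1]. -/

import Mathlib

/-!
For positive definite `x`, `x # y` is the largest positive semidefinite `z` with `z x⁻¹ z ≤ y`:
conjugating by `x^{-1/2}` turns `z x⁻¹ z ≤ y` into `w² ≤ v` with `w = x^{-1/2} z x^{-1/2}` and
`v = x^{-1/2} y x^{-1/2}`, and operator monotonicity of the square root gives `w ≤ v^{1/2}`. The map `(x, z) ↦ zᴴ x⁻¹ z` is jointly convex, because by the Schur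
complement criterion `zᴴ x⁻¹ z ≤ t` says that the block matrix `[[x, z], [zᴴ, t]]` is positive
semidefinite, a convex condition. Hence `z = λ (x₁ # y₁) + (1 - λ) (x₂ # y₂)` satisfies
`z x⁻¹ z ≤ λ y₁ + (1 - λ) y₂` for `x = λ x₁ + (1 - λ) x₂`, so `z ≤ x # (λ y₁ + (1 - λ) y₂)`.
-/

open Matrix
open scoped ComplexOrder Classical

/-- The positive semidefinite square root (junk value `0` if not PSD). -/
noncomputable def msqrt {n : ℕ} (A : Matrix (Fin n) (Fin n) ℂ) :
    Matrix (Fin n) (Fin n) ℂ :=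
  if h : A.PosSemidef then
    (h.1.eigenvectorUnitary : Matrix (Fin n) (Fin n) ℂ) *
      diagonal ((↑) ∘ (√·) ∘ h.1.eigenvalues) *
      (star h.1.eigenvectorUnitary : Matrix (Fin n) (Fin n) ℂ)
  else 0

/-- The matrix geometric mean `x # y = x^{1/2} (x^{-1/2} y x^{-1/2})^{1/2} x^{1/2}`. -/
noncomputable def geoMean {n : ℕ} (x y : Matrix (Fin n) (Fin n) ℂ) :
    Matrix (Fin n) (Fin n) ℂ :=
  msqrt x * msqrt ((msqrt x)⁻¹ * y * (msqrt x)⁻¹) * msqrt x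

open scoped MatrixOrder

namespace Matrix

variable {𝕜 m k : Type*} [RCLike 𝕜]

theorem convex_setOf_posDef : Convex ℝ {A : Matrix m m 𝕜 | A.PosDef} :=
  convex_iff_forall_pos.mpr fun _ hA _ hB _ _ ha hb _ => (hA.smul ha).add (hB.smul hb)

variable [Fintype m] [DecidableEq m] [Fintype k]

theorem PosDef.posSemidef_fromBlocks_conjTranspose_mul_inv_mul {A : Matrix m m 𝕜}
    (hA : A.PosDef) (B : Matrix m k 𝕜) : (fromBlocks A B Bᴴ (Bᴴ * A⁻¹ * B)).PosSemidef := by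
  have := hA.isUnit.invertible
  rw [PosDef.fromBlocks₁₁ B _ hA, sub_self]
  exact PosSemidef.zero

theorem convexOn_conjTranspose_mul_inv_mul :
    ConvexOn ℝ ({A : Matrix m m 𝕜 | A.PosDef} ×ˢ Set.univ)
      (fun p : Matrix m m 𝕜 × Matrix m k 𝕜 => p.2ᴴ * p.1⁻¹ * p.2) := by
  refine ⟨convex_setOf_posDef.prod convex_univ, ?_⟩
  rintro ⟨A₁, B₁⟩ ⟨hA₁, -⟩ ⟨A₂, B₂⟩ ⟨hA₂, -⟩ a b ha hb hab
  have hA : (a • A₁ + b • A₂).PosDef := convex_setOf_posDef hA₁ hA₂ ha hb hab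
  have := hA.isUnit.invertible
  have hblocks := ((hA₁.posSemidef_fromBlocks_conjTranspose_mul_inv_mul B₁).smul ha).add
    ((hA₂.posSemidef_fromBlocks_conjTranspose_mul_inv_mul B₂).smul hb)
  have hB : (a • B₁ + b • B₂)ᴴ = a • B₁ᴴ + b • B₂ᴴ := by simp
  rw [fromBlocks_smul, fromBlocks_smul, fromBlocks_add, ← hB, PosDef.fromBlocks₁₁ _ _ hA] at hblocks
  exact hblocks

theorem isSelfAdjoint_inv_cfcSqrt (A : Matrix m m 𝕜) : IsSelfAdjoint (CFC.sqrt A)⁻¹ :=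
  (CFC.sqrt_nonneg A).posSemidef.inv.isHermitian

-- Operator monotonicity of `CFC.sqrt` is proved in C⋆-algebras, hence the L2 operator norm.
open scoped Matrix.Norms.L2Operator in
theorem le_cfcSqrt_of_mul_self_le {A B : Matrix m m ℂ} (hA : 0 ≤ A) (h : A * A ≤ B) :
    A ≤ CFC.sqrt B :=
  calc A = CFC.sqrt (A * A) := (CFC.sqrt_unique rfl hA).symm
    _ ≤ CFC.sqrt B := CFC.sqrt_le_sqrt _ _ h

namespace PosDef

variable {A : Matrix m m 𝕜} (hA : A.PosDef)
include hA

theorem isUnit_det_cfcSqrt : IsUnit (CFC.sqrt A).det :=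
  (isUnit_iff_isUnit_det _).mp <|
    isUnit_of_mul_isUnit_left ((CFC.sqrt_mul_sqrt_self A hA.posSemidef.nonneg).symm ▸ hA.isUnit)

theorem inv_eq_inv_cfcSqrt_mul_inv_cfcSqrt : A⁻¹ = (CFC.sqrt A)⁻¹ * (CFC.sqrt A)⁻¹ := by
  rw [← Matrix.mul_inv_rev, CFC.sqrt_mul_sqrt_self A hA.posSemidef.nonneg]

end PosDef

end Matrix

variable {n : ℕ}

theorem msqrt_eq_cfcSqrt {A : Matrix (Fin n) (Fin n) ℂ} (hA : A.PosSemidef) :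
    msqrt A = CFC.sqrt A := by
  rw [msqrt, dif_pos hA, CFC.sqrt_eq_cfc, cfc_nnreal_eq_real _ A hA.nonneg, hA.1.cfc_eq]
  simp [IsHermitian.cfc, Function.comp_def, hA.eigenvalues_nonneg]

theorem msqrt_nonneg (A : Matrix (Fin n) (Fin n) ℂ) : 0 ≤ msqrt A := by
  by_cases hA : A.PosSemidef
  · exact msqrt_eq_cfcSqrt hA ▸ CFC.sqrt_nonneg A
  · simp [msqrt, hA]

theorem geoMean_nonneg (x y : Matrix (Fin n) (Fin n) ℂ) : 0 ≤ geoMean x y := by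
  unfold geoMean
  simpa [(msqrt_nonneg x).isSelfAdjoint.star_eq] using
    star_left_conjugate_nonneg (msqrt_nonneg ((msqrt x)⁻¹ * y * (msqrt x)⁻¹)) (msqrt x)

section PosDef

variable {x : Matrix (Fin n) (Fin n) ℂ} (hx : x.PosDef)
include hx

theorem geoMean_eq_of_posDef {y : Matrix (Fin n) (Fin n) ℂ} (hy : 0 ≤ y) :
    geoMean x y = CFC.sqrt x * CFC.sqrt ((CFC.sqrt x)⁻¹ * y * (CFC.sqrt x)⁻¹) * CFC.sqrt x := by
  have hconj : 0 ≤ (CFC.sqrt x)⁻¹ * y * (CFC.sqrt x)⁻¹ := by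
    simpa [(isSelfAdjoint_inv_cfcSqrt x).star_eq] using
      star_left_conjugate_nonneg hy (CFC.sqrt x)⁻¹
  rw [geoMean, msqrt_eq_cfcSqrt hx.posSemidef, msqrt_eq_cfcSqrt hconj.posSemidef]

theorem geoMean_mul_inv_mul_geoMean {y : Matrix (Fin n) (Fin n) ℂ} (hy : 0 ≤ y) :
    geoMean x y * x⁻¹ * geoMean x y = y := by
  have hs := hx.isUnit_det_cfcSqrt
  have hr := CFC.sqrt_mul_sqrt_self ((CFC.sqrt x)⁻¹ * y * (CFC.sqrt x)⁻¹) (by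
    simpa [(isSelfAdjoint_inv_cfcSqrt x).star_eq] using
      star_left_conjugate_nonneg hy (CFC.sqrt x)⁻¹)
  rw [geoMean_eq_of_posDef hx hy, hx.inv_eq_inv_cfcSqrt_mul_inv_cfcSqrt]
  generalize CFC.sqrt ((CFC.sqrt x)⁻¹ * y * (CFC.sqrt x)⁻¹) = r at hr ⊢
  generalize CFC.sqrt x = s at hs hr ⊢
  calc s * r * s * (s⁻¹ * s⁻¹) * (s * r * s) = s * (r * r) * s := by
        simp only [Matrix.mul_assoc, mul_nonsing_inv_cancel_left _ _ hs,
          nonsing_inv_mul_cancel_left _ _ hs]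
    _ = y := by
        simp only [hr, Matrix.mul_assoc, nonsing_inv_mul _ hs, Matrix.mul_one,
          mul_nonsing_inv_cancel_left _ _ hs]

theorem le_geoMean_of_mul_inv_mul_le {y z : Matrix (Fin n) (Fin n) ℂ} (hz : 0 ≤ z)
    (hzy : z * x⁻¹ * z ≤ y) : z ≤ geoMean x y := by
  have hy : 0 ≤ y := by
    refine le_trans ?_ hzy
    simpa [hz.isSelfAdjoint.star_eq] using star_left_conjugate_nonneg hx.posSemidef.inv.nonneg z
  rw [geoMean_eq_of_posDef hx hy]
  rw [hx.inv_eq_inv_cfcSqrt_mul_inv_cfcSqrt] at hzy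
  have hs := hx.isUnit_det_cfcSqrt
  have hs_star : star (CFC.sqrt x) = CFC.sqrt x := (CFC.sqrt_nonneg x).isSelfAdjoint.star_eq
  have hs_inv_star := (isSelfAdjoint_inv_cfcSqrt x).star_eq
  generalize CFC.sqrt x = s at *
  set w := s⁻¹ * z * s⁻¹
  have hw : 0 ≤ w := by simpa [hs_inv_star] using star_left_conjugate_nonneg hz s⁻¹
  have hww : w * w ≤ s⁻¹ * y * s⁻¹ := by
    simpa [w, hs_inv_star, Matrix.mul_assoc] using star_left_conjugate_le_conjugate hzy s⁻¹
  have hw_le := le_cfcSqrt_of_mul_self_le hw hww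
  have hz_eq : z = s * w * s := by
    simp only [w, Matrix.mul_assoc, nonsing_inv_mul _ hs, Matrix.mul_one,
      mul_nonsing_inv_cancel_left _ _ hs]
  rw [hz_eq]
  simpa [hs_star] using star_left_conjugate_le_conjugate hw_le s

end PosDef

/-- Joint concavity of the geometric mean:
`λ(x₁ # y₁) + (1−λ)(x₂ # y₂) ≤ (λx₁ + (1−λ)x₂) # (λy₁ + (1−λ)y₂)` in the Loewner order. -/
theorem geoMean_concave (n : ℕ) (x₁ x₂ y₁ y₂ : Matrix (Fin n) (Fin n) ℂ)
    (hx₁ : x₁.PosDef) (hx₂ : x₂.PosDef) (hy₁ : y₁.PosDef) (hy₂ : y₂.PosDef)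
    (l : ℝ) (hl : l ∈ Set.Icc (0 : ℝ) 1) :
    ((geoMean (l • x₁ + (1 - l) • x₂) (l • y₁ + (1 - l) • y₂)) -
      (l • geoMean x₁ y₁ + (1 - l) • geoMean x₂ y₂)).PosSemidef := by
  obtain ⟨hl₀, hl₁⟩ := hl
  have hl₁' : 0 ≤ 1 - l := sub_nonneg.2 hl₁
  have hx := convex_setOf_posDef hx₁ hx₂ hl₀ hl₁' (add_sub_cancel l 1)
  have hz : 0 ≤ l • geoMean x₁ y₁ + (1 - l) • geoMean x₂ y₂ :=
    (((geoMean_nonneg x₁ y₁).posSemidef.smul hl₀).add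
      ((geoMean_nonneg x₂ y₂).posSemidef.smul hl₁')).nonneg
  refine le_geoMean_of_mul_inv_mul_le hx hz ?_
  have hconv := convexOn_conjTranspose_mul_inv_mul.2 (x := (x₁, geoMean x₁ y₁))
    (y := (x₂, geoMean x₂ y₂)) ⟨hx₁, trivial⟩ ⟨hx₂, trivial⟩ hl₀ hl₁' (add_sub_cancel l 1)
  simpa only [Prod.smul_mk, Prod.mk_add_mk, hz.posSemidef.isHermitian.eq,
    (geoMean_nonneg _ _).posSemidef.isHermitian.eq,
    geoMean_mul_inv_mul_geoMean hx₁ hy₁.posSemidef.nonneg,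
    geoMean_mul_inv_mul_geoMean hx₂ hy₂.posSemidef.nonneg] using hconv
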